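/- Let 0 < λ < 1. For every m > 0, the infimum E_λ(m) of the one-dimensional generalized liquid drop energy 𝓔_λ[Ω] = 2K + (1/2)∬_{Ω×Ω} |x−y|^{−λ} dx dy, taken over all sets Ω ⊂ ℝ that are finite unions of K ≥ 1 nonempty bounded open intervals with pairwise disjoint closures and with Lebesgue measure |Ω| = m, equals the infimum over integers K ≥ 1 of the quantity 2K + K^{λ−1} m^{2−λ}/((1−λ)(2−λ)). -/

import Mathlib

/-!
On a single interval of length `ℓ` the Riesz self-interaction is computed exactly,
`(1/2)∬ |x-y|^{-λ} = ℓ^{2-λ}/((1-λ)(2-λ))`. For `K` intervals of total length `m` the energy is at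
least the sum of these diagonal terms, and convexity of `ℓ ↦ ℓ^{2-λ}` bounds that sum below by its
value at equal lengths `m/K`, namely `K^{λ-1} m^{2-λ}/((1-λ)(2-λ))`. Conversely, `K` intervals of
length `m/K` placed at mutual distance `D` have off-diagonal interaction at most `D^{-λ} m²`, which
vanishes as `D → ∞` because `λ > 0`; so each value of the formula is approached by admissible sets.
-/

open MeasureTheory Set ENNReal

/-- The Riesz self-interaction energy `(1/2)∬_{Ω×Ω} |x-y|^{-λ} dx dy` of a set `Ω ⊆ ℝ`. -/
noncomputable def rieszEnergy1d (lam : ℝ) (Ω : Set ℝ) : ℝ :=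
  (1 / 2) * ∫ x in Ω, ∫ y in Ω, |x - y| ^ (-lam)

/-- `Ω` is the union of the `K` nonempty bounded open intervals `(a i, b i)`,
whose closures are pairwise disjoint. -/
def IsIntervalUnion (K : ℕ) (a b : Fin K → ℝ) (Ω : Set ℝ) : Prop :=
  (∀ i, a i < b i) ∧
  (Pairwise fun i j => Disjoint (Icc (a i) (b i)) (Icc (a j) (b j))) ∧
  Ω = ⋃ i, Ioo (a i) (b i)

/-- The set of energies `2K + (1/2)∬_{Ω×Ω} |x-y|^{-λ}` of admissible sets `Ω` of mass `m`:
finite unions of `K ≥ 1` nonempty bounded open intervals with pairwise disjoint closures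
and Lebesgue measure `m`. -/
noncomputable def gldEnergies (lam m : ℝ) : Set ℝ :=
  { e | ∃ (K : ℕ) (a b : Fin K → ℝ) (Ω : Set ℝ), 1 ≤ K ∧ IsIntervalUnion K a b Ω ∧
      volume Ω = ENNReal.ofReal m ∧ e = 2 * K + rieszEnergy1d lam Ω }

open Finset in
theorem card_rpow_mul_rpow_sum_le_sum_rpow {ι : Type*} {s : Finset ι} (hs : s.Nonempty)
    {f : ι → ℝ} (hf : ∀ i ∈ s, 0 ≤ f i) {p : ℝ} (hp : 1 ≤ p) :
    (#s : ℝ) ^ (1 - p) * (∑ i ∈ s, f i) ^ p ≤ ∑ i ∈ s, f i ^ p := by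
  have hcard : (0 : ℝ) < #s := by exact_mod_cast hs.card_pos
  calc (#s : ℝ) ^ (1 - p) * (∑ i ∈ s, f i) ^ p
      ≤ (#s : ℝ) ^ (1 - p) * ((#s : ℝ) ^ (p - 1) * ∑ i ∈ s, f i ^ p) := by
        gcongr
        exact Real.rpow_sum_le_const_mul_sum_rpow_of_nonneg s hp hf
    _ = ∑ i ∈ s, f i ^ p := by
        rw [← mul_assoc, ← Real.rpow_add hcard, show 1 - p + (p - 1) = 0 by ring, Real.rpow_zero,
          one_mul]

theorem intervalIntegrable_abs_rpow {r : ℝ} (hr : -1 < r) (a b : ℝ) :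
    IntervalIntegrable (fun t => |t| ^ r) volume a b := by
  have hpos : ∀ c, 0 ≤ c → IntervalIntegrable (fun t => |t| ^ r) volume 0 c := fun c hc => by
    rw [intervalIntegrable_iff_integrableOn_Ioc_of_le hc]
    refine ((intervalIntegrable_iff_integrableOn_Ioc_of_le hc).1
      (intervalIntegral.intervalIntegrable_rpow' hr)).congr_fun (fun t ht => ?_) measurableSet_Ioc
    rw [abs_of_pos ht.1]
  have hall : ∀ c, IntervalIntegrable (fun t => |t| ^ r) volume 0 c := fun c => by
    rcases le_total 0 c with hc | hc
    · exact hpos c hc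
    · simpa using (hpos (-c) (neg_nonneg.2 hc)).comp_sub_left 0
  exact (hall a).symm.trans (hall b)

theorem intervalIntegrable_abs_sub_rpow {r : ℝ} (hr : -1 < r) (x a b : ℝ) :
    IntervalIntegrable (fun y => |x - y| ^ r) volume a b := by
  simpa using (intervalIntegrable_abs_rpow hr (x - a) (x - b)).comp_sub_left x

theorem integral_sub_rpow {p : ℝ} (hp : -1 < p) (a b : ℝ) :
    ∫ x in a..b, (x - a) ^ p = (b - a) ^ (p + 1) / (p + 1) := by
  rw [intervalIntegral.integral_comp_sub_right (fun t => t ^ p), sub_self,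
    integral_rpow (Or.inl hp), Real.zero_rpow (by linarith), sub_zero]

theorem integral_rpow_sub {p : ℝ} (hp : -1 < p) (a b : ℝ) :
    ∫ x in a..b, (b - x) ^ p = (b - a) ^ (p + 1) / (p + 1) := by
  rw [intervalIntegral.integral_comp_sub_left (fun t => t ^ p), sub_self,
    integral_rpow (Or.inl hp), Real.zero_rpow (by linarith), sub_zero]

theorem setLIntegral_Ioo_ofReal {f : ℝ → ℝ} {a b : ℝ} (hab : a ≤ b)
    (hf : IntervalIntegrable f volume a b) (hf0 : ∀ x ∈ Ioo a b, 0 ≤ f x) :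
    ∫⁻ x in Ioo a b, ENNReal.ofReal (f x) = ENNReal.ofReal (∫ x in a..b, f x) := by
  rw [intervalIntegral.integral_of_le hab, integral_Ioc_eq_integral_Ioo,
    ofReal_integral_eq_lintegral_ofReal ((intervalIntegrable_iff_integrableOn_Ioo_of_le hab).1 hf)
      (ae_restrict_of_forall_mem measurableSet_Ioo hf0)]

open Function

/-- Taking values in `ℝ≥0∞` makes `∫_s ∫_t |x-y|^{-λ}` additive in `s` and `t` with no
integrability side conditions. -/
noncomputable def rieszInteraction (lam : ℝ) (s t : Set ℝ) : ℝ≥0∞ :=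
  ∫⁻ x in s, ∫⁻ y in t, ENNReal.ofReal (|x - y| ^ (-lam))

section RieszInteraction

variable {lam : ℝ}

theorem measurable_rieszKernel :
    Measurable fun p : ℝ × ℝ => ENNReal.ofReal (|p.1 - p.2| ^ (-lam)) := by
  fun_prop

theorem integral_abs_sub_rpow (hlam1 : lam < 1) {a b x : ℝ} (hax : a ≤ x) (hxb : x ≤ b) :
    ∫ y in a..b, |x - y| ^ (-lam) = ((x - a) ^ (1 - lam) + (b - x) ^ (1 - lam)) / (1 - lam) := by
  have hp : -1 < -lam := by linarith
  have hleft : ∫ y in a..x, |x - y| ^ (-lam) = (x - a) ^ (1 - lam) / (1 - lam) := by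
    rw [intervalIntegral.integral_congr (g := fun y => (x - y) ^ (-lam)) fun y hy => ?_,
      integral_rpow_sub hp, neg_add_eq_sub]
    rw [uIcc_of_le hax] at hy
    simp only [abs_of_nonneg (sub_nonneg.2 hy.2)]
  have hright : ∫ y in x..b, |x - y| ^ (-lam) = (b - x) ^ (1 - lam) / (1 - lam) := by
    rw [intervalIntegral.integral_congr (g := fun y => (y - x) ^ (-lam)) fun y hy => ?_,
      integral_sub_rpow hp, neg_add_eq_sub]
    rw [uIcc_of_le hxb] at hy
    simp only [abs_sub_comm x, abs_of_nonneg (sub_nonneg.2 hy.1)]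
  rw [← intervalIntegral.integral_add_adjacent_intervals (intervalIntegrable_abs_sub_rpow hp x a x)
    (intervalIntegrable_abs_sub_rpow hp x x b), hleft, hright, add_div]

theorem lintegral_Ioo_rieszKernel (hlam1 : lam < 1) {a b x : ℝ} (hx : x ∈ Icc a b) :
    ∫⁻ y in Ioo a b, ENNReal.ofReal (|x - y| ^ (-lam))
      = ENNReal.ofReal (((x - a) ^ (1 - lam) + (b - x) ^ (1 - lam)) / (1 - lam)) := by
  rw [setLIntegral_Ioo_ofReal (hx.1.trans hx.2)
    (intervalIntegrable_abs_sub_rpow (by linarith) x a b)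
    (fun y _ => Real.rpow_nonneg (abs_nonneg _) _), integral_abs_sub_rpow hlam1 hx.1 hx.2]

theorem rieszInteraction_Ioo_self (hlam1 : lam < 1) {a b : ℝ} (hab : a ≤ b) :
    rieszInteraction lam (Ioo a b) (Ioo a b)
      = ENNReal.ofReal (2 * (b - a) ^ (2 - lam) / ((1 - lam) * (2 - lam))) := by
  have hp : -1 < 1 - lam := by linarith
  have hleft : Continuous fun x => (x - a) ^ (1 - lam) :=
    (continuous_sub_right a).rpow_const fun _ => Or.inr (by linarith)
  have hright : Continuous fun x => (b - x) ^ (1 - lam) :=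
    (continuous_sub_left b).rpow_const fun _ => Or.inr (by linarith)
  have hnonneg : ∀ x ∈ Ioo a b, 0 ≤ ((x - a) ^ (1 - lam) + (b - x) ^ (1 - lam)) / (1 - lam) :=
    fun x hx => div_nonneg (add_nonneg (Real.rpow_nonneg (by linarith [hx.1]) _)
      (Real.rpow_nonneg (by linarith [hx.2]) _)) (by linarith)
  rw [rieszInteraction, setLIntegral_congr_fun measurableSet_Ioo
      fun x hx => lintegral_Ioo_rieszKernel hlam1 (Ioo_subset_Icc_self hx),
    setLIntegral_Ioo_ofReal (f := fun x => ((x - a) ^ (1 - lam) + (b - x) ^ (1 - lam)) / (1 - lam))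
      hab (((hleft.add hright).div_const _).intervalIntegrable a b) hnonneg,
    intervalIntegral.integral_div, intervalIntegral.integral_add (hleft.intervalIntegrable a b)
      (hright.intervalIntegrable a b), integral_sub_rpow hp, integral_rpow_sub hp,
    show 1 - lam + 1 = 2 - lam by ring]
  congr 1
  field_simp
  ring

theorem rieszInteraction_mono {s s' t t' : Set ℝ} (hs : s ⊆ s') (ht : t ⊆ t') :
    rieszInteraction lam s t ≤ rieszInteraction lam s' t' :=
  (lintegral_mono_set hs).trans (lintegral_mono fun _ => lintegral_mono_set ht)

theorem rieszInteraction_self_ne_top (hlam1 : lam < 1) {Ω : Set ℝ}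
    (hΩ : Bornology.IsBounded Ω) : rieszInteraction lam Ω Ω ≠ ⊤ := by
  obtain ⟨r, hr, hΩr⟩ := hΩ.subset_closedBall_lt 0 0
  have hsub : Ω ⊆ Ioo (-(r + 1)) (r + 1) := fun x hx => by
    have := abs_le.1 (by simpa using hΩr hx)
    constructor <;> linarith
  refine ne_top_of_le_ne_top ?_ (rieszInteraction_mono hsub hsub)
  rw [rieszInteraction_Ioo_self hlam1 (by linarith)]
  exact ENNReal.ofReal_ne_top

theorem rieszEnergy1d_eq_half_toReal {Ω : Set ℝ} (hΩ : rieszInteraction lam Ω Ω ≠ ⊤) :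
    rieszEnergy1d lam Ω = 1 / 2 * (rieszInteraction lam Ω Ω).toReal := by
  set H : ℝ → ℝ≥0∞ := fun x => ∫⁻ y in Ω, ENNReal.ofReal (|x - y| ^ (-lam))
  have hH : Measurable H := measurable_rieszKernel.lintegral_prod_right'
  have hinner : ∀ x, ∫ y in Ω, |x - y| ^ (-lam) = (H x).toReal := fun x =>
    integral_eq_lintegral_of_nonneg_ae (ae_of_all _ fun y => Real.rpow_nonneg (abs_nonneg _) _)
      (by fun_prop : Measurable fun y => |x - y| ^ (-lam)).aestronglyMeasurable
  have hfin : ∀ᵐ x ∂volume.restrict Ω, H x < ⊤ := ae_lt_top hH hΩ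
  rw [rieszEnergy1d, rieszInteraction]
  simp_rw [hinner]
  rw [integral_eq_lintegral_of_nonneg_ae (ae_of_all _ fun _ => ENNReal.toReal_nonneg)
    hH.ennreal_toReal.aestronglyMeasurable,
    lintegral_congr_ae (hfin.mono fun x hx => ENNReal.ofReal_toReal hx.ne)]

variable {ι : Type*} [Fintype ι] {s : ι → Set ℝ}

theorem sum_rieszInteraction_Ioo_self (hlam1 : lam < 1) {a b : ι → ℝ} (hab : ∀ i, a i ≤ b i) :
    ∑ i, rieszInteraction lam (Ioo (a i) (b i)) (Ioo (a i) (b i))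
      = ENNReal.ofReal (2 * (∑ i, (b i - a i) ^ (2 - lam)) / ((1 - lam) * (2 - lam))) := by
  have hc : 0 < (1 - lam) * (2 - lam) := by nlinarith
  simp_rw [rieszInteraction_Ioo_self hlam1 (hab _)]
  rw [← ENNReal.ofReal_sum_of_nonneg fun i _ =>
      div_nonneg (mul_nonneg zero_le_two (Real.rpow_nonneg (sub_nonneg.2 (hab i)) _)) hc.le,
    Finset.mul_sum, Finset.sum_div]

theorem rieszInteraction_iUnion (hs : ∀ i, MeasurableSet (s i)) (hd : Pairwise (Disjoint on s)) :
    rieszInteraction lam (⋃ i, s i) (⋃ i, s i) = ∑ i, ∑ j, rieszInteraction lam (s i) (s j) := by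
  have hsplit : ∀ f : ℝ → ℝ≥0∞, ∫⁻ x in ⋃ i, s i, f x = ∑ i, ∫⁻ x in s i, f x := fun f => by
    rw [lintegral_iUnion hs hd, tsum_fintype]
  simp only [rieszInteraction, hsplit]
  exact Finset.sum_congr rfl fun i _ =>
    lintegral_finsetSum _ fun j _ => measurable_rieszKernel.lintegral_prod_right'

theorem sum_rieszInteraction_self_le_iUnion (hs : ∀ i, MeasurableSet (s i))
    (hd : Pairwise (Disjoint on s)) :
    ∑ i, rieszInteraction lam (s i) (s i) ≤ rieszInteraction lam (⋃ i, s i) (⋃ i, s i) := by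
  rw [rieszInteraction_iUnion hs hd]
  exact Finset.sum_le_sum fun i _ => Finset.single_le_sum
    (f := fun j => rieszInteraction lam (s i) (s j)) (fun j _ => zero_le) (Finset.mem_univ i)

theorem rieszInteraction_le_of_le_dist (hlam0 : 0 ≤ lam) {D : ℝ} (hD : 0 < D) {t u : Set ℝ}
    (hsep : ∀ x ∈ t, ∀ y ∈ u, D ≤ |x - y|) :
    rieszInteraction lam t u ≤ ENNReal.ofReal (D ^ (-lam)) * volume t * volume u := by
  have hker : ∀ x ∈ t, ∀ y ∈ u, ENNReal.ofReal (|x - y| ^ (-lam)) ≤ ENNReal.ofReal (D ^ (-lam)) :=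
    fun x hx y hy => ENNReal.ofReal_le_ofReal
      (Real.rpow_le_rpow_of_nonpos hD (hsep x hx y hy) (neg_nonpos.2 hlam0))
  calc rieszInteraction lam t u
      ≤ ∫⁻ _ in t, ENNReal.ofReal (D ^ (-lam)) * volume u :=
        setLIntegral_mono measurable_const fun x hx =>
          (setLIntegral_mono measurable_const (hker x hx)).trans_eq (setLIntegral_const _ _)
    _ = ENNReal.ofReal (D ^ (-lam)) * volume t * volume u := by
        rw [setLIntegral_const, mul_right_comm]

theorem rieszInteraction_iUnion_le [DecidableEq ι] (hlam0 : 0 ≤ lam) {D : ℝ} (hD : 0 < D)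
    (hs : ∀ i, MeasurableSet (s i))
    (hsep : ∀ i j, i ≠ j → ∀ x ∈ s i, ∀ y ∈ s j, D ≤ |x - y|) :
    rieszInteraction lam (⋃ i, s i) (⋃ i, s i)
      ≤ ∑ i, rieszInteraction lam (s i) (s i)
        + ENNReal.ofReal (D ^ (-lam)) * volume (⋃ i, s i) ^ 2 := by
  have hd : Pairwise (Disjoint on s) := fun i j hij => Set.disjoint_left.2 fun x hxi hxj => by
    have := hsep i j hij x hxi x hxj
    simp only [sub_self, abs_zero] at this
    linarith
  rw [rieszInteraction_iUnion hs hd, measure_iUnion hd hs, tsum_fintype, sq, Finset.sum_mul_sum,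
    Finset.mul_sum, ← Finset.sum_add_distrib]
  refine Finset.sum_le_sum fun i _ => ?_
  calc ∑ j, rieszInteraction lam (s i) (s j)
      ≤ ∑ j, ((if i = j then rieszInteraction lam (s i) (s i) else 0)
          + ENNReal.ofReal (D ^ (-lam)) * (volume (s i) * volume (s j))) :=
        Finset.sum_le_sum fun j _ => by
          by_cases hij : i = j
          · subst hij
            simp
          · simpa [hij, mul_assoc] using rieszInteraction_le_of_le_dist hlam0 hD (hsep i j hij)
    _ = _ := by simp [Finset.sum_add_distrib, Finset.mul_sum]

namespace IsIntervalUnion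

variable {K : ℕ} {a b : Fin K → ℝ} {Ω : Set ℝ}

theorem pairwise_disjoint_Ioo (h : IsIntervalUnion K a b Ω) :
    Pairwise (Disjoint on fun i => Ioo (a i) (b i)) :=
  fun _ _ hij => (h.2.1 hij).mono Ioo_subset_Icc_self Ioo_subset_Icc_self

theorem isBounded (h : IsIntervalUnion K a b Ω) : Bornology.IsBounded Ω :=
  h.2.2 ▸ Bornology.isBounded_iUnion.2 fun _ => Metric.isBounded_Ioo _ _

theorem volume_eq (h : IsIntervalUnion K a b Ω) :
    volume Ω = ENNReal.ofReal (∑ i, (b i - a i)) := by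
  rw [h.2.2, measure_iUnion h.pairwise_disjoint_Ioo fun _ => measurableSet_Ioo, tsum_fintype,
    ENNReal.ofReal_sum_of_nonneg fun i _ => sub_nonneg.2 (h.1 i).le]
  simp only [Real.volume_Ioo]

end IsIntervalUnion

theorem le_rieszEnergy1d_of_isIntervalUnion (hlam1 : lam < 1) {K : ℕ} (hK : 1 ≤ K)
    {a b : Fin K → ℝ} {Ω : Set ℝ} (h : IsIntervalUnion K a b Ω) :
    (K : ℝ) ^ (lam - 1) * (volume Ω).toReal ^ (2 - lam) / ((1 - lam) * (2 - lam))
      ≤ rieszEnergy1d lam Ω := by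
  have hc : 0 < (1 - lam) * (2 - lam) := by nlinarith
  have hℓ : ∀ i, 0 ≤ b i - a i := fun i => sub_nonneg.2 (h.1 i).le
  have hT := rieszInteraction_self_ne_top hlam1 h.isBounded
  have hdiag : 2 * (∑ i, (b i - a i) ^ (2 - lam)) / ((1 - lam) * (2 - lam))
      ≤ (rieszInteraction lam Ω Ω).toReal := by
    rw [← ENNReal.ofReal_le_iff_le_toReal hT,
      ← sum_rieszInteraction_Ioo_self hlam1 fun i => (h.1 i).le, h.2.2]
    exact sum_rieszInteraction_self_le_iUnion (fun _ => measurableSet_Ioo) h.pairwise_disjoint_Ioo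
  have hconv : (K : ℝ) ^ (lam - 1) * (∑ i, (b i - a i)) ^ (2 - lam)
      ≤ ∑ i, (b i - a i) ^ (2 - lam) := by
    have := card_rpow_mul_rpow_sum_le_sum_rpow (Finset.univ_nonempty_iff.2 ⟨⟨0, hK⟩⟩)
      (fun i _ => hℓ i) (show 1 ≤ 2 - lam by linarith)
    rwa [Finset.card_univ, Fintype.card_fin, show 1 - (2 - lam) = lam - 1 by ring] at this
  rw [h.volume_eq, ENNReal.toReal_ofReal (Finset.sum_nonneg fun i _ => hℓ i),
    rieszEnergy1d_eq_half_toReal hT]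
  calc (K : ℝ) ^ (lam - 1) * (∑ i, (b i - a i)) ^ (2 - lam) / ((1 - lam) * (2 - lam))
      ≤ (∑ i, (b i - a i) ^ (2 - lam)) / ((1 - lam) * (2 - lam)) := by gcongr
    _ ≤ 1 / 2 * (rieszInteraction lam Ω Ω).toReal := by
        rw [mul_div_assoc] at hdiag
        linarith

theorem le_abs_sub_of_mem_Icc_nat_mul {ℓ D : ℝ} (hℓD : 0 ≤ ℓ + D) {i j : ℕ} (hij : i ≠ j) {x y : ℝ}
    (hx : x ∈ Icc (i * (ℓ + D)) (i * (ℓ + D) + ℓ)) (hy : y ∈ Icc (j * (ℓ + D)) (j * (ℓ + D) + ℓ)) :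
    D ≤ |x - y| := by
  wlog h : i < j generalizing i j x y
  · rw [abs_sub_comm]
    exact this hij.symm hy hx (hij.lt_or_gt.resolve_left h)
  have hij' : (i : ℝ) + 1 ≤ j := by exact_mod_cast h
  exact le_abs.2 (Or.inr (by nlinarith [hx.2, hy.1, mul_le_mul_of_nonneg_right hij' hℓD]))

theorem exists_isIntervalUnion_rieszEnergy1d_le (hlam0 : 0 < lam) (hlam1 : lam < 1)
    {m : ℝ} (hm : 0 < m) {K : ℕ} (hK : 1 ≤ K) {ε : ℝ} (hε : 0 < ε) :
    ∃ a b : Fin K → ℝ, IsIntervalUnion K a b (⋃ i, Ioo (a i) (b i)) ∧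
      volume (⋃ i, Ioo (a i) (b i)) = ENNReal.ofReal m ∧
      rieszEnergy1d lam (⋃ i, Ioo (a i) (b i))
        ≤ (K : ℝ) ^ (lam - 1) * m ^ (2 - lam) / ((1 - lam) * (2 - lam)) + ε := by
  have hK0 : (0 : ℝ) < K := by exact_mod_cast hK
  have hc : 0 < (1 - lam) * (2 - lam) := by nlinarith
  obtain ⟨D, hDε, hD⟩ : ∃ D : ℝ, D ^ (-lam) < 2 * ε / m ^ 2 ∧ 0 < D :=
    (((tendsto_rpow_neg_atTop hlam0).eventually (gt_mem_nhds (by positivity))).and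
      (Filter.eventually_gt_atTop 0)).exists
  have hDpos : 0 < D ^ (-lam) := Real.rpow_pos_of_pos hD _
  set ℓ := m / K with hℓ_def
  have hℓ : 0 < ℓ := by positivity
  set a : Fin K → ℝ := fun i => (i : ℕ) * (ℓ + D)
  have hsep : ∀ i j : Fin K, i ≠ j → ∀ x ∈ Icc (a i) (a i + ℓ), ∀ y ∈ Icc (a j) (a j + ℓ),
      D ≤ |x - y| := fun i j hij x hx y hy =>
    le_abs_sub_of_mem_Icc_nat_mul (by positivity) (Fin.val_ne_of_ne hij) hx hy
  have hΩ : IsIntervalUnion K a (fun i => a i + ℓ) (⋃ i, Ioo (a i) (a i + ℓ)) :=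
    ⟨fun _ => by linarith, fun i j hij => Set.disjoint_left.2 fun x hxi hxj => by
      linarith [hsep i j hij x hxi x hxj, show |x - x| = 0 by simp], rfl⟩
  have hvol : volume (⋃ i, Ioo (a i) (a i + ℓ)) = ENNReal.ofReal m := by
    rw [hΩ.volume_eq]
    congr 1
    simp [hℓ_def, mul_div_cancel₀ _ hK0.ne']
  refine ⟨a, fun i => a i + ℓ, hΩ, hvol, ?_⟩
  have hT := rieszInteraction_iUnion_le hlam0.le hD (fun _ => measurableSet_Ioo)
    fun i j hij x hx y hy => hsep i j hij x (Ioo_subset_Icc_self hx) y (Ioo_subset_Icc_self hy)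
  have hsum : 2 * (∑ i : Fin K, (a i + ℓ - a i) ^ (2 - lam))
      = 2 * ((K : ℝ) ^ (lam - 1) * m ^ (2 - lam)) := by
    simp only [add_sub_cancel_left, Finset.sum_const, Finset.card_univ, Fintype.card_fin,
      nsmul_eq_mul, hℓ_def]
    rw [Real.div_rpow hm.le hK0.le, show lam - 1 = 1 - (2 - lam) by ring, Real.rpow_sub hK0 1,
      Real.rpow_one]
    field_simp
  rw [sum_rieszInteraction_Ioo_self hlam1 fun _ => by linarith, hsum, hvol,
    ← ENNReal.ofReal_pow hm.le, ← ENNReal.ofReal_mul hDpos.le,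
    ← ENNReal.ofReal_add (div_nonneg (by positivity) hc.le) (by positivity)] at hT
  rw [rieszEnergy1d_eq_half_toReal (ne_top_of_le_ne_top ENNReal.ofReal_ne_top hT)]
  have hcross : D ^ (-lam) * m ^ 2 < 2 * ε := (lt_div_iff₀ (by positivity)).1 hDε
  have := ENNReal.toReal_le_of_le_ofReal (by positivity) hT
  rw [mul_div_assoc] at this
  linarith

end RieszInteraction

theorem csInf_eq_csInf_of_forall_exists_le_add {A B : Set ℝ} (hB : B.Nonempty) (hB' : BddBelow B)
    (hAB : ∀ x ∈ A, ∃ y ∈ B, y ≤ x) (hBA : ∀ y ∈ B, ∀ ε > 0, ∃ x ∈ A, x ≤ y + ε) :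
    sInf A = sInf B := by
  obtain ⟨y₀, hy₀⟩ := hB
  obtain ⟨x₀, hx₀, -⟩ := hBA y₀ hy₀ 1 one_pos
  have hA' : BddBelow A := hB'.imp fun c hc x hx =>
    let ⟨y, hy, hyx⟩ := hAB x hx
    (hc hy).trans hyx
  refine le_antisymm (le_csInf ⟨y₀, hy₀⟩ fun y hy => le_of_forall_pos_le_add fun ε hε => ?_)
    (le_csInf ⟨x₀, hx₀⟩ fun x hx => ?_)
  · obtain ⟨x, hx, hxy⟩ := hBA y hy ε hε
    exact (csInf_le hA' hx).trans hxy
  · obtain ⟨y, hy, hyx⟩ := hAB x hx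
    exact (csInf_le hB' hy).trans hyx

/-- The one-dimensional generalized liquid drop infimum `E_λ(m)` equals
`inf_{K ≥ 1} (2K + K^{λ-1} m^{2-λ} / ((1-λ)(2-λ)))`. -/
theorem gld1d_inf_formula (lam : ℝ) (hlam0 : 0 < lam) (hlam1 : lam < 1)
    (m : ℝ) (hm : 0 < m) :
    sInf (gldEnergies lam m) =
      sInf { e : ℝ | ∃ K : ℕ, 1 ≤ K ∧
        e = 2 * K + (K : ℝ) ^ (lam - 1) * m ^ (2 - lam) / ((1 - lam) * (2 - lam)) } := by
  have hc : 0 < (1 - lam) * (2 - lam) := by nlinarith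
  refine csInf_eq_csInf_of_forall_exists_le_add ⟨_, 1, le_rfl, rfl⟩ ⟨0, ?_⟩ ?_ ?_
  · rintro _ ⟨K, -, rfl⟩
    exact add_nonneg (by positivity) (div_nonneg (by positivity) hc.le)
  · rintro _ ⟨K, a, b, Ω, hK, hΩ, hvol, rfl⟩
    have hlow := le_rieszEnergy1d_of_isIntervalUnion hlam1 hK hΩ
    rw [hvol, ENNReal.toReal_ofReal hm.le] at hlow
    exact ⟨_, ⟨K, hK, rfl⟩, by linarith⟩
  · rintro _ ⟨K, hK, rfl⟩ ε hε
    obtain ⟨a, b, hΩ, hvol, hup⟩ := exists_isIntervalUnion_rieszEnergy1d_le hlam0 hlam1 hm hK hε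
    exact ⟨_, ⟨K, a, b, _, hK, hΩ, hvol, rfl⟩, by linarith⟩
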